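/- arXiv:2408.10378 — 2 statements merged into one kernel-verified Lean document; each statement's English description precedes it below -/
import Mathlib

section
/- Let v : [0,1] → ℝ be a W^{1,p} function with v(0) = 0, let p, q ∈ (1, ∞) and δ ∈ (0,1) satisfy δ(1/q + 1 − 1/p) = 1/q, and set α = 1/δ. Then for every y ∈ (0,1), |v(y)|^α ≤ α · ‖v‖_{L^q(0,1)}^{α−1} · ‖v'‖_{L^p(0,1)}. -/
open Set MeasureTheory

/-!
By the chain rule `|v|^α` has derivative `α |v|^(α-2) v v'`, of modulus `α |v|^(α-1) |v'|`,
so the fundamental theorem of calculus and `v 0 = 0` give `|v y|^α ≤ α ∫₀^y |v|^(α-1) |v'|`.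
Hölder's inequality with the exponents `p' = p/(p-1)` and `p` bounds this by
`α (∫₀^y |v|^((α-1)p'))^(1/p') (∫₀^y |v'|^p)^(1/p)`, and the relation between `δ`, `p` and `q`
says exactly that `(α-1)p' = q`, i.e. the first factor is `‖v‖_q^(α-1)`.
-/

lemma continuous_mul_abs_rpow_sub_two_mul {p : ℝ} (hp : 1 < p) :
    Continuous fun x : ℝ => p * |x| ^ (p - 2) * x := by
  convert (contDiff_norm_rpow (E := ℝ) hp).continuous_deriv_one using 1
  funext x
  simpa using (hasDerivAt_norm_rpow x hp).deriv.symm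

lemma memLp_of_integrable_abs_rpow {X : Type*} [MeasurableSpace X] {μ : Measure X}
    {f : X → ℝ} {p : ℝ} (hp : 0 < p) (hf : AEStronglyMeasurable f μ)
    (h : Integrable (fun x => |f x| ^ p) μ) : MemLp f (ENNReal.ofReal p) μ := by
  rw [← integrable_norm_rpow_iff hf (by simpa using hp) ENNReal.ofReal_ne_top,
    ENNReal.toReal_ofReal hp.le]
  simpa using h

lemma aestronglyMeasurable_of_hasDerivAt {μ : Measure ℝ} {v v' : ℝ → ℝ} {s : Set ℝ}
    (hs : MeasurableSet s) (h : ∀ t ∈ s, HasDerivAt v (v' t) t) :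
    AEStronglyMeasurable v' (μ.restrict s) :=
  (measurable_deriv v).aestronglyMeasurable.congr <|
    (ae_restrict_iff' hs).mpr <| .of_forall fun t ht => (h t ht).deriv

lemma IntervalIntegrable.of_abs_rpow {f : ℝ → ℝ} {a b p : ℝ} (hab : a ≤ b) (hp : 1 ≤ p)
    (hf : AEStronglyMeasurable f (volume.restrict (Ioc a b)))
    (h : IntervalIntegrable (fun t => |f t| ^ p) volume a b) :
    IntervalIntegrable f volume a b := by
  rw [intervalIntegrable_iff_integrableOn_Ioc_of_le hab] at h ⊢
  exact (memLp_of_integrable_abs_rpow (by linarith) hf h).integrable (by simpa using hp)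

lemma intervalIntegral.integral_mul_le_Lp_mul_Lq_of_nonneg {f g : ℝ → ℝ} {a b p q : ℝ}
    (hab : a ≤ b) (hpq : p.HolderConjugate q) (hf₀ : ∀ t, 0 ≤ f t) (hg₀ : ∀ t, 0 ≤ g t)
    (hf : AEStronglyMeasurable f (volume.restrict (Ioc a b)))
    (hg : AEStronglyMeasurable g (volume.restrict (Ioc a b)))
    (hfp : IntervalIntegrable (fun t => f t ^ p) volume a b)
    (hgq : IntervalIntegrable (fun t => g t ^ q) volume a b) :
    ∫ t in a..b, f t * g t ≤
      (∫ t in a..b, f t ^ p) ^ (1 / p) * (∫ t in a..b, g t ^ q) ^ (1 / q) := by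
  rw [intervalIntegrable_iff_integrableOn_Ioc_of_le hab] at hfp hgq
  simp only [intervalIntegral.integral_of_le hab]
  refine MeasureTheory.integral_mul_le_Lp_mul_Lq_of_nonneg hpq (.of_forall hf₀) (.of_forall hg₀)
    (memLp_of_integrable_abs_rpow hpq.pos hf ?_) (memLp_of_integrable_abs_rpow hpq.symm.pos hg ?_)
  · simp only [abs_of_nonneg (hf₀ _)]; exact hfp
  · simp only [abs_of_nonneg (hg₀ _)]; exact hgq

lemma sub_one_mul_conjExponent_eq {p q δ : ℝ} (hp : 1 < p) (hq : q ≠ 0) (hδ : δ ≠ 0)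
    (h : δ * (1 / q + 1 - 1 / p) = 1 / q) : (1 / δ - 1) * p.conjExponent = q := by
  have hp' : p - 1 ≠ 0 := by linarith
  rw [Real.conjExponent]
  field_simp at h ⊢
  linear_combination -h

lemma abs_rpow_le_integral_abs_rpow_mul_deriv {v v' : ℝ → ℝ} {a b α : ℝ} (hα : 1 < α)
    (hab : a ≤ b)
    (hderiv : ∀ t ∈ Icc a b, HasDerivAt v (v' t) t) (hv' : IntervalIntegrable v' volume a b)
    (ha : v a = 0) :
    |v b| ^ α ≤ α * ∫ t in a..b, |v t| ^ (α - 1) * |v' t| := by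
  set g : ℝ → ℝ := fun x => α * |x| ^ (α - 2) * x
  rw [← uIcc_of_le hab] at hderiv
  have hvC : ContinuousOn v (uIcc a b) := HasDerivAt.continuousOn hderiv
  have hFTC : ∫ t in a..b, g (v t) * v' t = |v b| ^ α := by
    rw [intervalIntegral.integral_eq_sub_of_hasDerivAt (f := fun t => |v t| ^ α)
      (fun t ht => (hasDerivAt_abs_rpow (v t) hα).comp t (hderiv t ht))
      (hv'.continuousOn_mul ((continuous_mul_abs_rpow_sub_two_mul hα).comp_continuousOn hvC))]
    simp [ha, Real.zero_rpow (by linarith : α ≠ 0)]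
  have habs : ∀ x y : ℝ, |g x * y| = α * (|x| ^ (α - 1) * |y|) := by
    intro x y
    have : |x| ^ (α - 1) = |x| ^ (α - 2) * |x| := by
      rw [← Real.rpow_add_one' (abs_nonneg x) (by linarith)]; ring_nf
    rw [this, abs_mul, abs_mul, abs_mul, abs_of_pos (by linarith : 0 < α),
      abs_of_nonneg (Real.rpow_nonneg (abs_nonneg x) _)]
    ring
  calc |v b| ^ α ≤ |∫ t in a..b, g (v t) * v' t| := hFTC ▸ le_abs_self _
    _ ≤ ∫ t in a..b, |g (v t) * v' t| := intervalIntegral.abs_integral_le_integral_abs hab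
    _ = α * ∫ t in a..b, |v t| ^ (α - 1) * |v' t| := by
      simp only [habs, intervalIntegral.integral_const_mul]

theorem abs_rpow_le_Lq_norm_rpow_mul_Lp_norm_deriv {v v' : ℝ → ℝ} {a b p q α : ℝ}
    (hab : a ≤ b) (hp : 1 < p) (hα : 1 < α) (hq : (α - 1) * p.conjExponent = q)
    (hderiv : ∀ t ∈ Icc a b, HasDerivAt v (v' t) t)
    (hv' : IntervalIntegrable (fun t => |v' t| ^ p) volume a b) (ha : v a = 0) :
    |v b| ^ α ≤ α * ((∫ t in a..b, |v t| ^ q) ^ (1 / q)) ^ (α - 1) *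
      (∫ t in a..b, |v' t| ^ p) ^ (1 / p) := by
  set p' := p.conjExponent
  have hp' : p'.HolderConjugate p := (Real.HolderConjugate.conjExponent hp).symm
  have hvC : ContinuousOn (fun t => |v t| ^ (α - 1)) (Icc a b) :=
    (HasDerivAt.continuousOn hderiv).abs.rpow_const fun _ _ => Or.inr (by linarith)
  have hv'meas : AEStronglyMeasurable v' (volume.restrict (Ioc a b)) :=
    aestronglyMeasurable_of_hasDerivAt measurableSet_Ioc fun t ht =>
      hderiv t (Ioc_subset_Icc_self ht)
  have hpow (t : ℝ) : (|v t| ^ (α - 1)) ^ p' = |v t| ^ q := by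
    rw [← Real.rpow_mul (abs_nonneg _), hq]
  have hHolder := intervalIntegral.integral_mul_le_Lp_mul_Lq_of_nonneg hab hp'
    (fun t => Real.rpow_nonneg (abs_nonneg (v t)) (α - 1)) (fun t => abs_nonneg (v' t))
    ((hvC.mono Ioc_subset_Icc_self).aestronglyMeasurable measurableSet_Ioc)
    (continuous_abs.comp_aestronglyMeasurable hv'meas)
    ((hvC.rpow_const fun _ _ => Or.inr hp'.nonneg).intervalIntegrable_of_Icc hab) hv'
  simp only [hpow] at hHolder
  have hexp : 1 / p' = 1 / q * (α - 1) := by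
    rw [← hq]
    field_simp [hp'.ne_zero, (by linarith : α - 1 ≠ 0)]
  calc |v b| ^ α ≤ α * ∫ t in a..b, |v t| ^ (α - 1) * |v' t| :=
        abs_rpow_le_integral_abs_rpow_mul_deriv hα hab hderiv
          (hv'.of_abs_rpow hab hp.le hv'meas) ha
    _ ≤ α * ((∫ t in a..b, |v t| ^ q) ^ (1 / p') * (∫ t in a..b, |v' t| ^ p) ^ (1 / p)) := by
      gcongr
    _ = _ := by
      rw [hexp, Real.rpow_mul (intervalIntegral.integral_nonneg hab fun t _ => by positivity),
        mul_assoc]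

theorem pointwise_power_bound (v v' : ℝ → ℝ) (p q δ α : ℝ)
    (hp : 1 < p) (hq : 1 < q) (hδ : δ ∈ Set.Ioo (0 : ℝ) 1)
    (hpq : δ * (1 / q + 1 - 1 / p) = 1 / q) (hα : α = 1 / δ)
    (hderiv : ∀ y ∈ Set.Icc (0 : ℝ) 1, HasDerivAt v (v' y) y)
    (hv'int : IntervalIntegrable (fun y => |v' y| ^ p) volume 0 1)
    (hv0 : v 0 = 0) :
    ∀ y ∈ Set.Ioo (0 : ℝ) 1,
      |v y| ^ α ≤ α * ((∫ y in (0:ℝ)..1, |v y| ^ q) ^ (1 / q)) ^ (α - 1) *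
        (∫ y in (0:ℝ)..1, |v' y| ^ p) ^ (1 / p) := by
  rintro y ⟨hy0, hy1⟩
  have hα1 : 1 < α := hα ▸ one_lt_one_div hδ.1 hδ.2
  have hexp : (α - 1) * p.conjExponent = q :=
    hα ▸ sub_one_mul_conjExponent_eq hp (by positivity) hδ.1.ne' hpq
  have hvq₀ : 0 ≤ ∫ t in (0:ℝ)..y, |v t| ^ q :=
    intervalIntegral.integral_nonneg hy0.le fun t _ => by positivity
  have hv'p₀ : 0 ≤ ∫ t in (0:ℝ)..y, |v' t| ^ p :=
    intervalIntegral.integral_nonneg hy0.le fun t _ => by positivity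
  have hvq : ∫ t in (0:ℝ)..y, |v t| ^ q ≤ ∫ t in (0:ℝ)..1, |v t| ^ q :=
    intervalIntegral.integral_mono_interval le_rfl hy0.le hy1.le
      (.of_forall fun t => by positivity)
      (((HasDerivAt.continuousOn hderiv).abs.rpow_const fun _ _ => Or.inr (by positivity)
        ).intervalIntegrable_of_Icc zero_le_one)
  have hv'p : ∫ t in (0:ℝ)..y, |v' t| ^ p ≤ ∫ t in (0:ℝ)..1, |v' t| ^ p :=
    intervalIntegral.integral_mono_interval le_rfl hy0.le hy1.le
      (.of_forall fun t => by positivity) hv'int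
  have hvq₁ := hvq₀.trans hvq
  calc |v y| ^ α
      ≤ α * ((∫ t in (0:ℝ)..y, |v t| ^ q) ^ (1 / q)) ^ (α - 1) *
          (∫ t in (0:ℝ)..y, |v' t| ^ p) ^ (1 / p) :=
        abs_rpow_le_Lq_norm_rpow_mul_Lp_norm_deriv hy0.le hp hα1 hexp
          (fun t ht => hderiv t (Icc_subset_Icc_right hy1.le ht))
          (hv'int.mono_set (by simp [uIcc_of_le, hy0.le, Icc_subset_Icc_right hy1.le])) hv0
    _ ≤ _ := by gcongr
end

section
/- Let v : [0,1] → ℝ be a W^{1,2} function with v(0) = 0 and let r ∈ (0,1). Then ‖v‖_{L^2(0,1)}^{(3+r)/2} ≤ ((3+r)/2) · ‖v'‖_{L^2(0,1)} · ‖v‖_{L^{1+r}(0,1)}^{(1+r)/2}. -/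
/-!
Put `α = (1 + r) / 2`. The map `ψ u = |u| ^ α * u` is differentiable with `ψ' u = (α + 1) |u| ^ α`,
so the fundamental theorem of calculus (using `v 0 = 0`) and Cauchy–Schwarz give, for `x ∈ [0, 1]`,
`|v x| ^ (α + 1) ≤ (α + 1) ∫₀¹ |v| ^ α |v'| ≤ (α + 1) ‖v'‖₂ (∫₀¹ |v| ^ (1 + r)) ^ (1/2)`.
As `α + 1 = (3 + r) / 2` and `‖v‖₂ ≤ sup |v|` on the unit interval, the inequality follows.
-/

open Set MeasureTheory Filter Topology Interval

theorem hasDerivAt_abs_rpow_mul_self {α : ℝ} (hα : 0 < α) (u : ℝ) :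
    HasDerivAt (fun u : ℝ => |u| ^ α * u) ((α + 1) * |u| ^ α) u := by
  rcases eq_or_ne u 0 with rfl | hu
  · rw [hasDerivAt_iff_tendsto_slope]
    have hcont : Tendsto (fun u : ℝ => |u| ^ α) (𝓝[≠] 0) (𝓝 0) := by
      have := ((continuous_abs.rpow_const fun _ => Or.inr hα.le).tendsto (0 : ℝ)).mono_left
        (nhdsWithin_le_nhds (s := {0}ᶜ))
      simpa [Real.zero_rpow hα.ne'] using this
    simp only [abs_zero, Real.zero_rpow hα.ne', mul_zero]
    refine hcont.congr' ?_
    filter_upwards [self_mem_nhdsWithin] with x (hx : x ≠ 0)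
    simp [slope_def_field, hx]
  · have hpow : HasDerivAt (fun u : ℝ => |u| ^ α) (SignType.sign u * α * |u| ^ (α - 1)) u :=
      (hasDerivAt_abs hu).rpow_const (Or.inl (abs_ne_zero.2 hu))
    refine (hpow.mul (hasDerivAt_id' u)).congr_deriv ?_
    calc SignType.sign u * α * |u| ^ (α - 1) * u + |u| ^ α * 1
        = α * (|u| ^ (α - 1) * (SignType.sign u * u)) + |u| ^ α := by ring
      _ = (α + 1) * |u| ^ α := by
        rw [sign_mul_self, Real.rpow_sub_one (abs_ne_zero.2 hu),
          div_mul_cancel₀ _ (abs_ne_zero.2 hu)]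
        ring

theorem integral_abs_mul_abs_le_sqrt_mul_sqrt {X : Type*} [MeasurableSpace X] {μ : Measure X}
    {f g : X → ℝ} (hf : MemLp f 2 μ) (hg : MemLp g 2 μ) :
    ∫ x, |f x| * |g x| ∂μ ≤ √(∫ x, f x ^ 2 ∂μ) * √(∫ x, g x ^ 2 ∂μ) := by
  have h := integral_mul_norm_le_Lp_mul_Lq Real.HolderConjugate.two_two
    (by rwa [ENNReal.ofReal_ofNat] : MemLp f (ENNReal.ofReal 2) μ)
    (by rwa [ENNReal.ofReal_ofNat] : MemLp g (ENNReal.ofReal 2) μ)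
  simp only [Real.norm_eq_abs, Real.rpow_two, sq_abs] at h
  rwa [Real.sqrt_eq_rpow, Real.sqrt_eq_rpow]

theorem intervalIntegral_abs_mul_abs_le_sqrt_mul_sqrt {f g : ℝ → ℝ} {a b : ℝ} (hab : a ≤ b)
    (hf : MemLp f 2 (volume.restrict (Ioc a b))) (hg : MemLp g 2 (volume.restrict (Ioc a b))) :
    ∫ x in a..b, |f x| * |g x| ≤ √(∫ x in a..b, f x ^ 2) * √(∫ x in a..b, g x ^ 2) := by
  simpa only [intervalIntegral.integral_of_le hab] using
    integral_abs_mul_abs_le_sqrt_mul_sqrt hf hg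

theorem ContinuousOn.memLp_restrict_Ioc {E : Type*} [NormedAddCommGroup E] {f : ℝ → E}
    {a b : ℝ} (hf : ContinuousOn f (Icc a b)) (p : ENNReal) :
    MemLp f p (volume.restrict (Ioc a b)) := by
  obtain ⟨C, hC⟩ := isCompact_Icc.exists_bound_of_continuousOn hf
  exact MemLp.of_bound ((hf.mono Ioc_subset_Icc_self).aestronglyMeasurable measurableSet_Ioc) C
    ((ae_restrict_iff' measurableSet_Ioc).2
      (ae_of_all _ fun x hx => hC x (Ioc_subset_Icc_self hx)))

theorem aestronglyMeasurable_restrict_of_hasDerivAt {F : Type*} [NormedAddCommGroup F]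
    [NormedSpace ℝ F] [CompleteSpace F] {f f' : ℝ → F} {μ : Measure ℝ} {s : Set ℝ}
    (hs : MeasurableSet s) (hf : ∀ x ∈ s, HasDerivAt f (f' x) x) :
    AEStronglyMeasurable f' (μ.restrict s) :=
  (stronglyMeasurable_deriv f).aestronglyMeasurable.congr
    ((ae_restrict_iff' hs).2 (ae_of_all _ fun x hx => (hf x hx).deriv))

theorem intervalIntegral_sq_le_of_abs_le {v : ℝ → ℝ} {a b M : ℝ} (h : ∀ x ∈ Ι a b, |v x| ≤ M) :
    ∫ x in a..b, v x ^ 2 ≤ M ^ 2 * |b - a| := by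
  refine (Real.le_norm_self _).trans <|
    intervalIntegral.norm_integral_le_of_norm_le_const fun x hx => ?_
  simpa only [norm_pow, Real.norm_eq_abs] using pow_le_pow_left₀ (abs_nonneg _) (h x hx) 2

theorem abs_rpow_add_one_le_integral {v v' : ℝ → ℝ} {a b α x : ℝ} (hα : 0 < α)
    (hv : ∀ y ∈ Icc a b, HasDerivAt v (v' y) y) (hv' : IntervalIntegrable v' volume a b)
    (hva : v a = 0) (hx : x ∈ Icc a b) :
    |v x| ^ (α + 1) ≤ (α + 1) * ∫ y in a..b, |v y| ^ α * |v' y| := by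
  have hvc : ContinuousOn v (Icc a b) := fun y hy => (hv y hy).continuousAt.continuousWithinAt
  have hax : Icc a x ⊆ Icc a b := Icc_subset_Icc_right hx.2
  set ψ' : ℝ → ℝ := fun y => (α + 1) * |v y| ^ α * v' y
  have hψ' : IntervalIntegrable ψ' volume a b := hv'.continuousOn_mul <| by
    rw [uIcc_of_le (hx.1.trans hx.2)]
    exact continuousOn_const.mul (hvc.abs.rpow_const fun _ _ => Or.inr hα.le)
  have hftc : ∫ y in a..x, ψ' y = |v x| ^ α * v x := by
    rw [intervalIntegral.integral_eq_sub_of_hasDerivAt (f := fun y => |v y| ^ α * v y)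
      (fun y hy => (hasDerivAt_abs_rpow_mul_self hα (v y)).comp y
        (hv y (hax (uIcc_of_le hx.1 ▸ hy))))
      (hψ'.mono_set (by rw [uIcc_of_le hx.1, uIcc_of_le (hx.1.trans hx.2)]; exact hax))]
    simp [hva]
  calc |v x| ^ (α + 1) = |∫ y in a..x, ψ' y| := by
        rw [hftc, abs_mul, abs_of_nonneg (Real.rpow_nonneg (abs_nonneg (v x)) α),
          Real.rpow_add_one' (abs_nonneg _) (by linarith)]
    _ ≤ ∫ y in a..x, |ψ' y| := intervalIntegral.abs_integral_le_integral_abs hx.1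
    _ ≤ ∫ y in a..b, |ψ' y| := intervalIntegral.integral_mono_interval le_rfl hx.1 hx.2
        (ae_of_all _ fun _ => abs_nonneg _) hψ'.abs
    _ = (α + 1) * ∫ y in a..b, |v y| ^ α * |v' y| := by
        rw [← intervalIntegral.integral_const_mul]
        refine intervalIntegral.integral_congr fun y _ => ?_
        simp only [ψ', abs_mul, abs_of_nonneg (by positivity : 0 ≤ α + 1),
          Real.abs_rpow_of_nonneg (abs_nonneg _), abs_abs, mul_assoc]

theorem abs_rpow_add_one_le_mul_sqrt_mul_sqrt {v v' : ℝ → ℝ} {a b α x : ℝ} (hα : 0 < α)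
    (hv : ∀ y ∈ Icc a b, HasDerivAt v (v' y) y) (hv' : MemLp v' 2 (volume.restrict (Ioc a b)))
    (hva : v a = 0) (hx : x ∈ Icc a b) :
    |v x| ^ (α + 1) ≤ (α + 1) * √(∫ y in a..b, |v y| ^ (α * 2)) * √(∫ y in a..b, v' y ^ 2) := by
  have hab : a ≤ b := hx.1.trans hx.2
  have hvα : MemLp (fun y => |v y| ^ α) 2 (volume.restrict (Ioc a b)) :=
    ContinuousOn.memLp_restrict_Ioc (fun y hy => ((hv y hy).continuousAt.abs.rpow_const
      (Or.inr hα.le)).continuousWithinAt) 2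
  calc |v x| ^ (α + 1) ≤ (α + 1) * ∫ y in a..b, |v y| ^ α * |v' y| :=
        abs_rpow_add_one_le_integral hα hv
          ((intervalIntegrable_iff_integrableOn_Ioc_of_le hab).2 (hv'.integrable one_le_two))
          hva hx
    _ ≤ (α + 1) * (√(∫ y in a..b, (|v y| ^ α) ^ 2) * √(∫ y in a..b, v' y ^ 2)) := by
        gcongr
        simpa only [Real.abs_rpow_of_nonneg (abs_nonneg _), abs_abs] using
          intervalIntegral_abs_mul_abs_le_sqrt_mul_sqrt hab hvα hv'
    _ = (α + 1) * √(∫ y in a..b, |v y| ^ (α * 2)) * √(∫ y in a..b, v' y ^ 2) := by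
        simp only [← Real.rpow_mul_natCast (abs_nonneg _), Nat.cast_ofNat, mul_assoc]

theorem rpow_sqrt_integral_sq_le_of_abs_rpow_le {v : ℝ → ℝ} {p R : ℝ} (hp : 0 < p) (hR : 0 ≤ R)
    (hv : ∀ x ∈ Ioc (0:ℝ) 1, |v x| ^ p ≤ R) : √(∫ x in (0:ℝ)..1, v x ^ 2) ^ p ≤ R := by
  rw [← Real.le_rpow_inv_iff_of_pos (Real.sqrt_nonneg _) hR hp]
  calc √(∫ x in (0:ℝ)..1, v x ^ 2) ≤ √((R ^ p⁻¹) ^ 2 * |1 - 0|) :=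
        Real.sqrt_le_sqrt <| intervalIntegral_sq_le_of_abs_le fun x hx =>
          (Real.le_rpow_inv_iff_of_pos (abs_nonneg _) hR hp).2
            (hv x (uIoc_of_le (zero_le_one (α := ℝ)) ▸ hx))
    _ = R ^ p⁻¹ := by rw [sub_zero, abs_one, mul_one, Real.sqrt_sq (Real.rpow_nonneg hR _)]

theorem interpolation_GN (v v' : ℝ → ℝ) (r : ℝ) (hr : r ∈ Set.Ioo (0 : ℝ) 1)
    (hderiv : ∀ y ∈ Set.Icc (0 : ℝ) 1, HasDerivAt v (v' y) y)
    (hv'int : IntervalIntegrable (fun y => (v' y) ^ 2) volume 0 1)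
    (hv0 : v 0 = 0) :
    (Real.sqrt (∫ y in (0:ℝ)..1, (v y) ^ 2)) ^ ((3 + r) / 2) ≤
      ((3 + r) / 2) * Real.sqrt (∫ y in (0:ℝ)..1, (v' y) ^ 2) *
        Real.sqrt (∫ y in (0:ℝ)..1, |v y| ^ (1 + r)) := by
  have hα : 0 < (1 + r) / 2 := by linarith [hr.1]
  have hv' : MemLp v' 2 (volume.restrict (Ioc 0 1)) :=
    (memLp_two_iff_integrable_sq (aestronglyMeasurable_restrict_of_hasDerivAt measurableSet_Ioc
      fun y hy => hderiv y (Ioc_subset_Icc_self hy))).2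
      ((intervalIntegrable_iff_integrableOn_Ioc_of_le zero_le_one).1 hv'int)
  have hR :
      0 ≤ (3 + r) / 2 * √(∫ y in (0:ℝ)..1, v' y ^ 2) * √(∫ y in (0:ℝ)..1, |v y| ^ (1 + r)) :=
    mul_nonneg (mul_nonneg (by linarith) (Real.sqrt_nonneg _)) (Real.sqrt_nonneg _)
  refine rpow_sqrt_integral_sq_le_of_abs_rpow_le (by linarith) hR fun x hx => ?_
  calc |v x| ^ ((3 + r) / 2) = |v x| ^ ((1 + r) / 2 + 1) := by ring_nf
    _ ≤ ((1 + r) / 2 + 1) * √(∫ y in (0:ℝ)..1, |v y| ^ ((1 + r) / 2 * 2)) *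
          √(∫ y in (0:ℝ)..1, v' y ^ 2) :=
        abs_rpow_add_one_le_mul_sqrt_mul_sqrt hα hderiv hv' hv0 (Ioc_subset_Icc_self hx)
    _ = _ := by ring_nf
end
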